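/- arXiv:0811.2627 — 2 statements merged into one kernel-verified Lean document; each statement's English description precedes it below -/
import Mathlib

section
/- Let f: A→B and g: B→C be 1-cells in S with g fully faithful. Then (Ker(f), k(f), (ε_f∘g)·g_I^♭) is a kernel of the composite f∘g: A→C. -/
/-!
Common framework: relatively exact 2-categories (after Nakaoka,
"Cohomology theory in 2-categories").
-/

open CategoryTheory Bicategory

universe w v u

/-- The tensor unit of a monoidal structure, given explicitly. -/
abbrev munit {H : Type v} [Category.{w} H] (m : MonoidalCategory H) : H :=
  @MonoidalCategoryStruct.tensorUnit H _ m.toMonoidalCategoryStruct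

/-- The tensor product of two objects, for an explicitly given monoidal structure. -/
abbrev mtens {H : Type v} [Category.{w} H] (m : MonoidalCategory H) (x y : H) : H :=
  @MonoidalCategoryStruct.tensorObj H _ m.toMonoidalCategoryStruct x y

section Defs

variable {B : Type u} [Bicategory.{w, v} B]

/-- A 1-cell `f` is faithful if postwhiskering `− ▷ f` is injective on 2-cells. -/
def CFaithful {A C : B} (f : A ⟶ C) : Prop :=
  ∀ ⦃X : B⦄ ⦃g h : X ⟶ A⦄ (η θ : g ⟶ h), η ▷ f = θ ▷ f → η = θ

/-- A 1-cell `f` is fully faithful if `− ∘ f` is a fully faithful functor on hom-categories. -/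
def CFullyFaithful {A C : B} (f : A ⟶ C) : Prop :=
  CFaithful f ∧ ∀ ⦃X : B⦄ (g h : X ⟶ A) (μ : g ≫ f ⟶ h ≫ f), ∃ η : g ⟶ h, η ▷ f = μ

/-- A 1-cell `f` is cofaithful if prewhiskering `f ◁ −` is injective on 2-cells. -/
def CCofaithful {A C : B} (f : A ⟶ C) : Prop :=
  ∀ ⦃X : B⦄ ⦃g h : C ⟶ X⦄ (η θ : g ⟶ h), f ◁ η = f ◁ θ → η = θ

/-- A 1-cell `f` is fully cofaithful if `f ∘ −` is a fully faithful functor on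
hom-categories. -/
def CFullyCofaithful {A C : B} (f : A ⟶ C) : Prop :=
  CCofaithful f ∧ ∀ ⦃X : B⦄ (g h : C ⟶ X) (μ : f ≫ g ⟶ f ≫ h), ∃ η : g ⟶ h, f ◁ η = μ

/-- A 1-cell is an equivalence if it has a quasi-inverse up to invertible 2-cells. -/
def Is2Equiv {A C : B} (f : A ⟶ C) : Prop :=
  ∃ g : C ⟶ A, Nonempty (f ≫ g ≅ 𝟙 A) ∧ Nonempty (g ≫ f ≅ 𝟙 C)

/-- 2-universal product of two 0-cells. -/
def IsProduct2 (A₁ A₂ P : B) (p₁ : P ⟶ A₁) (p₂ : P ⟶ A₂) : Prop :=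
  (∀ (X : B) (q₁ : X ⟶ A₁) (q₂ : X ⟶ A₂),
    ∃ (q : X ⟶ P) (_ : q ≫ p₁ ⟶ q₁) (_ : q ≫ p₂ ⟶ q₂), True)
  ∧ (∀ (X : B) (q₁ : X ⟶ A₁) (q₂ : X ⟶ A₂) (r r' : X ⟶ P)
      (ξ₁ : r ≫ p₁ ⟶ q₁) (ξ₂ : r ≫ p₂ ⟶ q₂) (ξ₁' : r' ≫ p₁ ⟶ q₁) (ξ₂' : r' ≫ p₂ ⟶ q₂),
      ∃! η : r ⟶ r', ((η ▷ p₁) ≫ ξ₁' = ξ₁) ∧ ((η ▷ p₂) ≫ ξ₂' = ξ₂))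

/-- 2-universal coproduct of two 0-cells. -/
def IsCoproduct2 (A₁ A₂ P : B) (i₁ : A₁ ⟶ P) (i₂ : A₂ ⟶ P) : Prop :=
  (∀ (X : B) (q₁ : A₁ ⟶ X) (q₂ : A₂ ⟶ X),
    ∃ (q : P ⟶ X) (_ : i₁ ≫ q ⟶ q₁) (_ : i₂ ≫ q ⟶ q₂), True)
  ∧ (∀ (X : B) (q₁ : A₁ ⟶ X) (q₂ : A₂ ⟶ X) (r r' : P ⟶ X)
      (ξ₁ : i₁ ≫ r ⟶ q₁) (ξ₂ : i₂ ≫ r ⟶ q₂) (ξ₁' : i₁ ≫ r' ⟶ q₁) (ξ₂' : i₂ ≫ r' ⟶ q₂),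
      ∃! η : r ⟶ r', ((i₁ ◁ η) ≫ ξ₁' = ξ₁) ∧ ((i₂ ◁ η) ≫ ξ₂' = ξ₂))

/-- 2-universal difference kernel of a parallel pair of 1-cells. -/
def IsDiffKernel {A C : B} (g h : A ⟶ C) (D : B) (d : D ⟶ A) (φ : d ≫ g ⟶ d ≫ h) : Prop :=
  (∀ (X : B) (e : X ⟶ A) (ψ : e ≫ g ⟶ e ≫ h),
    ∃ (e' : X ⟶ D) (ε' : e' ≫ d ⟶ e),
      (α_ e' d g).hom ≫ (e' ◁ φ) ≫ (α_ e' d h).inv ≫ (ε' ▷ h) = (ε' ▷ g) ≫ ψ)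
  ∧ (∀ (X : B) (e : X ⟶ A) (ψ : e ≫ g ⟶ e ≫ h)
      (e₁ e₂ : X ⟶ D) (ε₁ : e₁ ≫ d ⟶ e) (ε₂ : e₂ ≫ d ⟶ e),
      ((α_ e₁ d g).hom ≫ (e₁ ◁ φ) ≫ (α_ e₁ d h).inv ≫ (ε₁ ▷ h) = (ε₁ ▷ g) ≫ ψ) →
      ((α_ e₂ d g).hom ≫ (e₂ ◁ φ) ≫ (α_ e₂ d h).inv ≫ (ε₂ ▷ h) = (ε₂ ▷ g) ≫ ψ) →
      ∃! η : e₁ ⟶ e₂, (η ▷ d) ≫ ε₂ = ε₁)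

/-- 2-universal pullback of a cospan of 1-cells. -/
def IsPullback2 {A₁ A₂ C : B} (f₁ : A₁ ⟶ C) (f₂ : A₂ ⟶ C) (P : B)
    (p₁ : P ⟶ A₂) (p₂ : P ⟶ A₁) (ξ : p₁ ≫ f₂ ⟶ p₂ ≫ f₁) : Prop :=
  (∀ (X : B) (g₁ : X ⟶ A₂) (g₂ : X ⟶ A₁) (η : g₁ ≫ f₂ ⟶ g₂ ≫ f₁),
    ∃ (g : X ⟶ P) (ξ₁ : g ≫ p₁ ⟶ g₁) (ξ₂ : g ≫ p₂ ⟶ g₂),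
      (ξ₁ ▷ f₂) ≫ η = (α_ g p₁ f₂).hom ≫ (g ◁ ξ) ≫ (α_ g p₂ f₁).inv ≫ (ξ₂ ▷ f₁))
  ∧ (∀ (X : B) (g₁ : X ⟶ A₂) (g₂ : X ⟶ A₁) (η : g₁ ≫ f₂ ⟶ g₂ ≫ f₁)
      (g g' : X ⟶ P) (ξ₁ : g ≫ p₁ ⟶ g₁) (ξ₂ : g ≫ p₂ ⟶ g₂)
      (ξ₁' : g' ≫ p₁ ⟶ g₁) (ξ₂' : g' ≫ p₂ ⟶ g₂),
      ((ξ₁ ▷ f₂) ≫ η = (α_ g p₁ f₂).hom ≫ (g ◁ ξ) ≫ (α_ g p₂ f₁).inv ≫ (ξ₂ ▷ f₁)) →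
      ((ξ₁' ▷ f₂) ≫ η = (α_ g' p₁ f₂).hom ≫ (g' ◁ ξ) ≫ (α_ g' p₂ f₁).inv ≫ (ξ₂' ▷ f₁)) →
      ∃! ζ : g ⟶ g', ((ζ ▷ p₁) ≫ ξ₁' = ξ₁) ∧ ((ζ ▷ p₂) ≫ ξ₂' = ξ₂))

end Defs

/-- A locally SCG 2-category: each hom-category is a symmetric categorical group,
`Hom` is a 2-functor into SCG (expressed through the zero 1-cells, the unit
constraints `sharp`/`flat` of the monoidal functors `f ∘ −`, `− ∘ f` and their
coherence), there is a zero object, and binary (co)products exist. -/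
structure LocSCG (B : Type u) [Bicategory.{w, v} B] where
  /-- symmetric monoidal structure on each hom-category -/
  monStr : ∀ A C : B, MonoidalCategory (A ⟶ C)
  symm : ∀ A C : B, @SymmetricCategory (A ⟶ C) _ (monStr A C)
  /-- every 2-cell is invertible -/
  cellIso : ∀ {A C : B} {f g : A ⟶ C} (η : f ⟶ g), IsIso η
  /-- every 1-cell is ⊗-invertible up to an isomorphism -/
  objInv : ∀ {A C : B} (f : A ⟶ C),
    ∃ g : A ⟶ C, Nonempty (mtens (monStr A C) f g ≅ munit (monStr A C))
  /-- zero 1-cells compose to zero 1-cells -/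
  zero_comp : ∀ A C E : B, munit (monStr A C) ≫ munit (monStr C E) = munit (monStr A E)
  /-- unit constraint `f_I^♯ : f ∘ 0 ⟶ 0` of the monoidal functor `f ∘ −` -/
  sharp : ∀ {A C E : B} (f : A ⟶ C), f ≫ munit (monStr C E) ≅ munit (monStr A E)
  /-- unit constraint `f_I^♭ : 0 ∘ f ⟶ 0` of the monoidal functor `− ∘ f` -/
  flat : ∀ {A C E : B} (f : C ⟶ E), munit (monStr A C) ≫ f ≅ munit (monStr A E)
  sharp_natural : ∀ {A C E : B} {f g : A ⟶ C} (η : f ⟶ g),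
    (η ▷ munit (monStr C E)) ≫ (sharp g).hom = (sharp f).hom
  flat_natural : ∀ {A C E : B} {f g : C ⟶ E} (η : f ⟶ g),
    (munit (monStr A C) ◁ η) ≫ (flat g).hom = (flat f).hom
  /-- unit constraints of zero 1-cells are identities -/
  sharp_zero : ∀ A C E : B,
    (sharp (E := E) (munit (monStr A C))).hom = eqToHom (zero_comp A C E)
  flat_zero : ∀ A C E : B,
    (flat (A := A) (munit (monStr C E))).hom = eqToHom (zero_comp A C E)
  sharp_comp : ∀ {A C E G : B} (f : A ⟶ C) (g : C ⟶ E),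
    (sharp (E := G) (f ≫ g)).hom
      = (α_ f g (munit (monStr E G))).hom ≫ (f ◁ (sharp g).hom) ≫ (sharp f).hom
  flat_comp : ∀ {X A C E : B} (f : A ⟶ C) (g : C ⟶ E),
    (flat (A := X) (f ≫ g)).hom
      = (α_ (munit (monStr X A)) f g).inv ≫ ((flat f).hom ▷ g) ≫ (flat g).hom
  sharp_flat : ∀ {A C E G : B} (f : A ⟶ C) (g : E ⟶ G),
    ((sharp f).hom ▷ g) ≫ (flat g).hom
      = (α_ f (munit (monStr C E)) g).hom ≫ (f ◁ (flat g).hom) ≫ (sharp f).hom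
  /-- tensor constraint of the monoidal functor `k ∘ −` -/
  sharpTensor : ∀ {X A C : B} (k : X ⟶ A) (g h : A ⟶ C),
    k ≫ mtens (monStr A C) g h ≅ mtens (monStr X C) (k ≫ g) (k ≫ h)
  /-- tensor constraint of the monoidal functor `− ∘ k` -/
  flatTensor : ∀ {A C E : B} (k : C ⟶ E) (g h : A ⟶ C),
    mtens (monStr A C) g h ≫ k ≅ mtens (monStr A E) (g ≫ k) (h ≫ k)
  /-- the zero object -/
  zObj : B
  homZZ : ∀ f : zObj ⟶ zObj, f = munit (monStr zObj zObj)
  cellZZ : ∀ (f g : zObj ⟶ zObj) (η θ : f ⟶ g), η = θ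
  toZero : ∀ {A : B} (f : A ⟶ zObj), f ⟶ munit (monStr A zObj)
  toZero_unique : ∀ {A : B} (f : A ⟶ zObj) (η θ : f ⟶ munit (monStr A zObj)), η = θ
  fromZero : ∀ {A : B} (f : zObj ⟶ A), f ⟶ munit (monStr zObj A)
  fromZero_unique : ∀ {A : B} (f : zObj ⟶ A) (η θ : f ⟶ munit (monStr zObj A)), η = θ
  hasProd : ∀ A₁ A₂ : B, ∃ (P : B) (p₁ : P ⟶ A₁) (p₂ : P ⟶ A₂), IsProduct2 A₁ A₂ P p₁ p₂
  hasCoprod : ∀ A₁ A₂ : B, ∃ (P : B) (i₁ : A₁ ⟶ P) (i₂ : A₂ ⟶ P), IsCoproduct2 A₁ A₂ P i₁ i₂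

namespace LocSCG

variable {B : Type u} [Bicategory.{w, v} B]

/-- the zero 1-cell `0_{A,C}`. -/
def zro (S : LocSCG B) (A C : B) : A ⟶ C := munit (S.monStr A C)

/-- tensor product of parallel 1-cells in a hom-category. -/
def tens (S : LocSCG B) {A C : B} (f g : A ⟶ C) : A ⟶ C := mtens (S.monStr A C) f g

/-- tensor product of 2-cells in a hom-category. -/
def tensHom (S : LocSCG B) {A C : B} {f₁ g₁ f₂ g₂ : A ⟶ C} (η : f₁ ⟶ g₁) (θ : f₂ ⟶ g₂) :
    S.tens f₁ f₂ ⟶ S.tens g₁ g₂ :=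
  @MonoidalCategoryStruct.tensorHom _ _ (S.monStr A C).toMonoidalCategoryStruct _ _ _ _ η θ

/-- associator of the hom-category monoidal structure. -/
def tassoc (S : LocSCG B) {A C : B} (f g h : A ⟶ C) :
    S.tens (S.tens f g) h ≅ S.tens f (S.tens g h) :=
  @MonoidalCategoryStruct.associator _ _ (S.monStr A C).toMonoidalCategoryStruct f g h

/-- left unitor of the hom-category monoidal structure. -/
def tlunit (S : LocSCG B) {A C : B} (f : A ⟶ C) : S.tens (S.zro A C) f ≅ f :=
  @MonoidalCategoryStruct.leftUnitor _ _ (S.monStr A C).toMonoidalCategoryStruct f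

/-- right unitor of the hom-category monoidal structure. -/
def trunit (S : LocSCG B) {A C : B} (f : A ⟶ C) : S.tens f (S.zro A C) ≅ f :=
  @MonoidalCategoryStruct.rightUnitor _ _ (S.monStr A C).toMonoidalCategoryStruct f

/-- inverse of a 2-cell. -/
noncomputable def inv2 (S : LocSCG B) {A C : B} {f g : A ⟶ C} (η : f ⟶ g) : g ⟶ f :=
  @CategoryTheory.inv _ _ _ _ η (S.cellIso η)

variable (S : LocSCG B)

/-- `(K, k, ε)` is a (2-universal) kernel of `f`. -/
def IsKernel {A C : B} (f : A ⟶ C) (K : B) (k : K ⟶ A) (ε' : k ≫ f ⟶ S.zro K C) : Prop :=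
  (∀ (X : B) (x : X ⟶ A) (e : x ≫ f ⟶ S.zro X C),
    ∃ (x' : X ⟶ K) (e' : x' ≫ k ⟶ x),
      (e' ▷ f) ≫ e = (α_ x' k f).hom ≫ (x' ◁ ε') ≫ (S.sharp x').hom)
  ∧ (∀ (X : B) (x : X ⟶ A) (e : x ≫ f ⟶ S.zro X C)
      (x₁ x₂ : X ⟶ K) (e₁ : x₁ ≫ k ⟶ x) (e₂ : x₂ ≫ k ⟶ x),
      ((e₁ ▷ f) ≫ e = (α_ x₁ k f).hom ≫ (x₁ ◁ ε') ≫ (S.sharp x₁).hom) →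
      ((e₂ ▷ f) ≫ e = (α_ x₂ k f).hom ≫ (x₂ ◁ ε') ≫ (S.sharp x₂).hom) →
      ∃! η : x₁ ⟶ x₂, (η ▷ k) ≫ e₂ = e₁)

/-- `(Q, c, π)` is a (2-universal) cokernel of `f`. -/
def IsCokernel {A C : B} (f : A ⟶ C) (Q : B) (c : C ⟶ Q) (π : f ≫ c ⟶ S.zro A Q) : Prop :=
  (∀ (X : B) (x : C ⟶ X) (e : f ≫ x ⟶ S.zro A X),
    ∃ (x' : Q ⟶ X) (e' : c ≫ x' ⟶ x),
      (f ◁ e') ≫ e = (α_ f c x').inv ≫ (π ▷ x') ≫ (S.flat x').hom)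
  ∧ (∀ (X : B) (x : C ⟶ X) (e : f ≫ x ⟶ S.zro A X)
      (x₁ x₂ : Q ⟶ X) (e₁ : c ≫ x₁ ⟶ x) (e₂ : c ≫ x₂ ⟶ x),
      ((f ◁ e₁) ≫ e = (α_ f c x₁).inv ≫ (π ▷ x₁) ≫ (S.flat x₁).hom) →
      ((f ◁ e₂) ≫ e = (α_ f c x₂).inv ≫ (π ▷ x₂) ≫ (S.flat x₂).hom) →
      ∃! η : x₁ ⟶ x₂, (c ◁ η) ≫ e₂ = e₁)

/-- compatibility of a candidate `(x, e)` with `φ` (relative kernel condition). -/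
def RelKerCompat {X A C E : B} (f : A ⟶ C) (g : C ⟶ E) (φ : f ≫ g ⟶ S.zro A E)
    (x : X ⟶ A) (e : x ≫ f ⟶ S.zro X C) : Prop :=
  (α_ x f g).hom ≫ (x ◁ φ) ≫ (S.sharp x).hom = (e ▷ g) ≫ (S.flat g).hom

/-- `(K, k, ε)` is a (2-universal) relative kernel `Ker(f, φ)` of `f : A ⟶ C`
relative to `g : C ⟶ E`, `φ : f ∘ g ⟶ 0`. -/
def IsRelKernel {A C E : B} (f : A ⟶ C) (g : C ⟶ E) (φ : f ≫ g ⟶ S.zro A E)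
    (K : B) (k : K ⟶ A) (ε' : k ≫ f ⟶ S.zro K C) : Prop :=
  S.RelKerCompat f g φ k ε'
  ∧ (∀ (X : B) (x : X ⟶ A) (e : x ≫ f ⟶ S.zro X C), S.RelKerCompat f g φ x e →
      ∃ (x' : X ⟶ K) (e' : x' ≫ k ⟶ x),
        (e' ▷ f) ≫ e = (α_ x' k f).hom ≫ (x' ◁ ε') ≫ (S.sharp x').hom)
  ∧ (∀ (X : B) (x : X ⟶ A) (e : x ≫ f ⟶ S.zro X C), S.RelKerCompat f g φ x e →
      ∀ (x₁ x₂ : X ⟶ K) (e₁ : x₁ ≫ k ⟶ x) (e₂ : x₂ ≫ k ⟶ x),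
        ((e₁ ▷ f) ≫ e = (α_ x₁ k f).hom ≫ (x₁ ◁ ε') ≫ (S.sharp x₁).hom) →
        ((e₂ ▷ f) ≫ e = (α_ x₂ k f).hom ≫ (x₂ ◁ ε') ≫ (S.sharp x₂).hom) →
        ∃! η : x₁ ⟶ x₂, (η ▷ k) ≫ e₂ = e₁)

/-- compatibility of a candidate `(x, e)` with `φ` (relative cokernel condition). -/
def RelCokCompat {A C E X : B} (f : A ⟶ C) (g : C ⟶ E) (φ : f ≫ g ⟶ S.zro A E)
    (x : E ⟶ X) (e : g ≫ x ⟶ S.zro C X) : Prop :=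
  (φ ▷ x) ≫ (S.flat x).hom = (α_ f g x).hom ≫ (f ◁ e) ≫ (S.sharp f).hom

/-- `(Q, c, π)` is a (2-universal) relative cokernel `Cok(g, φ)` of `g : C ⟶ E`
relative to `f : A ⟶ C`, `φ : f ∘ g ⟶ 0`. -/
def IsRelCokernel {A C E : B} (f : A ⟶ C) (g : C ⟶ E) (φ : f ≫ g ⟶ S.zro A E)
    (Q : B) (c : E ⟶ Q) (π : g ≫ c ⟶ S.zro C Q) : Prop :=
  S.RelCokCompat f g φ c π
  ∧ (∀ (X : B) (x : E ⟶ X) (e : g ≫ x ⟶ S.zro C X), S.RelCokCompat f g φ x e →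
      ∃ (x' : Q ⟶ X) (e' : c ≫ x' ⟶ x),
        (g ◁ e') ≫ e = (α_ g c x').inv ≫ (π ▷ x') ≫ (S.flat x').hom)
  ∧ (∀ (X : B) (x : E ⟶ X) (e : g ≫ x ⟶ S.zro C X), S.RelCokCompat f g φ x e →
      ∀ (x₁ x₂ : Q ⟶ X) (e₁ : c ≫ x₁ ⟶ x) (e₂ : c ≫ x₂ ⟶ x),
        ((g ◁ e₁) ≫ e = (α_ g c x₁).inv ≫ (π ▷ x₁) ≫ (S.flat x₁).hom) →
        ((g ◁ e₂) ≫ e = (α_ g c x₂).inv ≫ (π ▷ x₂) ≫ (S.flat x₂).hom) →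
        ∃! η : x₁ ⟶ x₂, (c ◁ η) ≫ e₂ = e₁)

/-- a 0-cell is zero if it is equivalent to the zero object. -/
def ZeroEq (X : B) : Prop := ∃ e : X ⟶ S.zObj, Is2Equiv e

/-- 2-exactness of `(f, g, φ)` in the middle 0-cell: the cokernel of the induced
factorization of `f` through any kernel of `g` is zero. -/
def TwoExact {A C E : B} (f : A ⟶ C) (g : C ⟶ E) (φ : f ≫ g ⟶ S.zro A E) : Prop :=
  ∀ (K : B) (k : K ⟶ C) (ε' : k ≫ g ⟶ S.zro K E), S.IsKernel g K k ε' →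
  ∀ (fb : A ⟶ K) (φb : fb ≫ k ⟶ f),
    ((φb ▷ g) ≫ φ = (α_ fb k g).hom ≫ (fb ◁ ε') ≫ (S.sharp fb).hom) →
    S.IsCokernel fb S.zObj (S.zro K S.zObj) (S.sharp fb).hom

/-- relative 2-exactness at the middle 0-cell `A₂` of a 5-term window
`A₀ → A₁ → A₂ → A₃ → A₄` of a complex: the relative cohomology
`H = Cok(k, ν₂)` is equivalent to the zero object. -/
def RelTwoExactWindow {A₀ A₁ A₂ A₃ A₄ : B}
    (d₀ : A₀ ⟶ A₁) (d₁ : A₁ ⟶ A₂) (d₂ : A₂ ⟶ A₃) (d₃ : A₃ ⟶ A₄)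
    (δ₁ : d₀ ≫ d₁ ⟶ S.zro A₀ A₂) (δ₂ : d₁ ≫ d₂ ⟶ S.zro A₁ A₃)
    (δ₃ : d₂ ≫ d₃ ⟶ S.zro A₂ A₄) : Prop :=
  ∀ (Z : B) (z : Z ⟶ A₂) (ζ : z ≫ d₂ ⟶ S.zro Z A₃),
    S.IsRelKernel d₂ d₃ δ₃ Z z ζ →
  ∀ (k : A₁ ⟶ Z) (ν₁ : k ≫ z ⟶ d₁) (ν₂ : d₀ ≫ k ⟶ S.zro A₀ Z),
    ((ν₁ ▷ d₂) ≫ δ₂ = (α_ k z d₂).hom ≫ (k ◁ ζ) ≫ (S.sharp k).hom) →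
    ((α_ d₀ k z).hom ≫ (d₀ ◁ ν₁) ≫ δ₁ = (ν₂ ▷ z) ≫ (S.flat z).hom) →
  ∀ (H : B) (c : Z ⟶ H) (π : k ≫ c ⟶ S.zro A₁ H),
    S.IsRelCokernel d₀ k ν₂ H c π → S.ZeroEq H

end LocSCG

/-- The remaining axioms of a relatively exact 2-category: existence of kernels and
cokernels, and the characterization of (co)faithful 1-cells. -/
structure IsRelExact {B : Type u} [Bicategory.{w, v} B] (S : LocSCG B) : Prop where
  hasKer : ∀ {A C : B} (f : A ⟶ C),
    ∃ (K : B) (k : K ⟶ A) (ε' : k ≫ f ⟶ S.zro K C), S.IsKernel f K k ε'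
  hasCok : ∀ {A C : B} (f : A ⟶ C),
    ∃ (Q : B) (c : C ⟶ Q) (π : f ≫ c ⟶ S.zro A Q), S.IsCokernel f Q c π
  faithful_iff : ∀ {A C : B} (f : A ⟶ C) (Q : B) (c : C ⟶ Q) (π : f ≫ c ⟶ S.zro A Q),
    S.IsCokernel f Q c π → (CFaithful f ↔ S.IsKernel c A f π)
  cofaithful_iff : ∀ {A C : B} (f : A ⟶ C) (K : B) (k : K ⟶ A) (ε' : k ≫ f ⟶ S.zro K C),
    S.IsKernel f K k ε' → (CCofaithful f ↔ S.IsCokernel k C f ε')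

/-- A (cochain) complex in a locally SCG 2-category. -/
structure Cpx {B : Type u} [Bicategory.{w, v} B] (S : LocSCG B) where
  X : ℤ → B
  d : ∀ n : ℤ, X n ⟶ X (n + 1)
  δ : ∀ n : ℤ, d n ≫ d (n + 1) ⟶ S.zro (X n) (X (n + 1 + 1))
  compat : ∀ n : ℤ,
    (α_ (d n) (d (n + 1)) (d (n + 1 + 1))).hom ≫ (d n ◁ δ (n + 1)) ≫ (S.sharp (d n)).hom
      = (δ n ▷ d (n + 1 + 1)) ≫ (S.flat (d (n + 1 + 1))).hom

/-- A morphism of complexes. -/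
structure CpxMor {B : Type u} [Bicategory.{w, v} B] (S : LocSCG B) (A₁ A₂ : Cpx S) where
  f : ∀ n : ℤ, A₁.X n ⟶ A₂.X n
  lam : ∀ n : ℤ, A₁.d n ≫ f (n + 1) ⟶ f n ≫ A₂.d n
  compat : ∀ n : ℤ,
    (A₁.δ n ▷ f (n + 1 + 1)) ≫ (S.flat (f (n + 1 + 1))).hom
      = (α_ (A₁.d n) (A₁.d (n + 1)) (f (n + 1 + 1))).hom ≫ (A₁.d n ◁ lam (n + 1))
          ≫ (α_ (A₁.d n) (f (n + 1)) (A₂.d (n + 1))).inv ≫ (lam n ▷ A₂.d (n + 1))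
          ≫ (α_ (f n) (A₂.d n) (A₂.d (n + 1))).hom ≫ (f n ◁ A₂.δ n) ≫ (S.sharp (f n)).hom

/-- An extension of complexes: degreewise an extension, with compatible 2-cells. -/
def IsCpxExtension {B : Type u} [Bicategory.{w, v} B] (S : LocSCG B) {A₁ A₂ A₃ : Cpx S}
    (F : CpxMor S A₁ A₂) (G : CpxMor S A₂ A₃)
    (φ : ∀ n : ℤ, F.f n ≫ G.f n ⟶ S.zro (A₁.X n) (A₃.X n)) : Prop :=
  (∀ n : ℤ, S.IsKernel (G.f n) (A₁.X n) (F.f n) (φ n)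
      ∧ S.IsCokernel (F.f n) (A₃.X n) (G.f n) (φ n))
  ∧ (∀ n : ℤ,
      (F.lam n ▷ G.f (n + 1)) ≫ (α_ (F.f n) (A₂.d n) (G.f (n + 1))).hom
          ≫ (F.f n ◁ G.lam n) ≫ (α_ (F.f n) (G.f n) (A₃.d n)).inv
          ≫ (φ n ▷ A₃.d n) ≫ (S.flat (A₃.d n)).hom
        = (α_ (A₁.d n) (F.f (n + 1)) (G.f (n + 1))).hom ≫ (A₁.d n ◁ φ (n + 1))
            ≫ (S.sharp (A₁.d n)).hom)

/-- A witness for the (relative) cohomology `H = Cok(k, ν₂)` of a complex at the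
0-cell `X (m + 2)`. -/
structure HWitness {B : Type u} [Bicategory.{w, v} B] (S : LocSCG B) (A : Cpx S) (m : ℤ) where
  Z : B
  z : Z ⟶ A.X (m + 1 + 1)
  ζ : z ≫ A.d (m + 1 + 1) ⟶ S.zro Z (A.X (m + 1 + 1 + 1))
  isZ : S.IsRelKernel (A.d (m + 1 + 1)) (A.d (m + 1 + 1 + 1)) (A.δ (m + 1 + 1)) Z z ζ
  k : A.X (m + 1) ⟶ Z
  ν₁ : k ≫ z ⟶ A.d (m + 1)
  ν₂ : A.d m ≫ k ⟶ S.zro (A.X m) Z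
  hν₁ : (ν₁ ▷ A.d (m + 1 + 1)) ≫ A.δ (m + 1)
      = (α_ k z (A.d (m + 1 + 1))).hom ≫ (k ◁ ζ) ≫ (S.sharp k).hom
  hν₂ : (α_ (A.d m) k z).hom ≫ (A.d m ◁ ν₁) ≫ A.δ m = (ν₂ ▷ z) ≫ (S.flat z).hom
  H : B
  c : Z ⟶ H
  π : k ≫ c ⟶ S.zro (A.X (m + 1)) H
  isH : S.IsRelCokernel (A.d m) k ν₂ H c π

/-! Since `g` is fully faithful, `e ↦ (e ▷ g) · g_I^♭` is a bijection between null 2-cells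
`x ≫ f ⟹ 0` and `x ≫ f ≫ g ⟹ 0`. By the coherence of the unit constraints it matches the
kernel conditions for `f` and for `f ≫ g`, so the universal property of `Ker f` transfers. -/

namespace LocSCG

variable {B : Type u} [Bicategory.{w, v} B] (S : LocSCG B)

/-- The paper's `(e ∘ g) · g_I^♭`. -/
def zeroWhiskerRight {X C E : B} (g : C ⟶ E) {h : X ⟶ C} (e : h ⟶ S.zro X C) :
    h ≫ g ⟶ S.zro X E :=
  (e ▷ g) ≫ (S.flat g).hom

variable {S}

theorem whiskerRight_comp_zeroWhiskerRight {X C E : B} (g : C ⟶ E) {h h' : X ⟶ C}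
    (η : h' ⟶ h) (e : h ⟶ S.zro X C) :
    (η ▷ g) ≫ S.zeroWhiskerRight g e = S.zeroWhiskerRight g (η ≫ e) := by
  unfold zeroWhiskerRight
  rw [comp_whiskerRight]
  exact (Category.assoc _ _ _).symm

theorem zeroWhiskerRight_injective {X C E : B} {g : C ⟶ E} (hg : CFaithful g) {h : X ⟶ C}
    {e e' : h ⟶ S.zro X C} (he : S.zeroWhiskerRight g e = S.zeroWhiskerRight g e') :
    e = e' :=
  hg e e' ((cancel_mono (S.flat g).hom).1 he)

theorem zeroWhiskerRight_surjective {X C E : B} {g : C ⟶ E}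
    (hg : ∀ ⦃X : B⦄ (h h' : X ⟶ C) (μ : h ≫ g ⟶ h' ≫ g), ∃ η : h ⟶ h', η ▷ g = μ)
    {h : X ⟶ C} (e : h ≫ g ⟶ S.zro X E) :
    ∃ e₀ : h ⟶ S.zro X C, S.zeroWhiskerRight g e₀ = e := by
  obtain ⟨e₀, he₀⟩ := hg h (S.zro X C) (e ≫ (S.flat g).inv)
  refine ⟨e₀, ?_⟩
  unfold zeroWhiskerRight
  unfold zro at e e₀ he₀ ⊢
  rw [he₀, Category.assoc, Iso.inv_hom_id, Category.comp_id]

theorem whiskerLeft_zeroWhiskerRight_comp_sharp {X K A C E : B} (x' : X ⟶ K) (k : K ⟶ A)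
    (f : A ⟶ C) (g : C ⟶ E) (ε' : k ≫ f ⟶ S.zro K C) :
    (α_ x' k (f ≫ g)).hom ≫ (x' ◁ ((α_ k f g).inv ≫ S.zeroWhiskerRight g ε'))
        ≫ (S.sharp x').hom
      = (α_ (x' ≫ k) f g).inv
        ≫ S.zeroWhiskerRight g ((α_ x' k f).hom ≫ (x' ◁ ε') ≫ (S.sharp x').hom) := by
  unfold zeroWhiskerRight
  unfold zro at ε' ⊢
  simp [S.sharp_flat]

theorem kernel_condition_comp_iff {X K A C E : B} {f : A ⟶ C} {g : C ⟶ E}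
    (hg : CFaithful g) {k : K ⟶ A} (ε' : k ≫ f ⟶ S.zro K C) {x : X ⟶ A} (e : x ≫ f ⟶ S.zro X C)
    (x' : X ⟶ K) (e' : x' ≫ k ⟶ x) :
    (e' ▷ (f ≫ g)) ≫ (α_ x f g).inv ≫ S.zeroWhiskerRight g e
        = (α_ x' k (f ≫ g)).hom ≫ (x' ◁ ((α_ k f g).inv ≫ S.zeroWhiskerRight g ε'))
          ≫ (S.sharp x').hom ↔
      (e' ▷ f) ≫ e = (α_ x' k f).hom ≫ (x' ◁ ε') ≫ (S.sharp x').hom := by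
  have lhs : (e' ▷ (f ≫ g)) ≫ (α_ x f g).inv ≫ S.zeroWhiskerRight g e
      = (α_ (x' ≫ k) f g).inv ≫ S.zeroWhiskerRight g ((e' ▷ f) ≫ e) := by
    rw [← whiskerRight_comp_zeroWhiskerRight, whiskerRight_comp, Category.assoc,
      Category.assoc, Iso.hom_inv_id_assoc]
  rw [lhs, whiskerLeft_zeroWhiskerRight_comp_sharp, cancel_epi]
  exact ⟨zeroWhiskerRight_injective hg, congrArg _⟩

end LocSCG

theorem stmt14_general {B : Type u} [Bicategory.{w, v} B]
    (S : LocSCG B)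
    {A C E : B} (f : A ⟶ C) (g : C ⟶ E) (hg : CFullyFaithful g)
    (K : B) (k : K ⟶ A) (ε' : k ≫ f ⟶ S.zro K C) (hK : S.IsKernel f K k ε') :
    S.IsKernel (f ≫ g) K k ((α_ k f g).inv ≫ (ε' ▷ g) ≫ (S.flat g).hom) := by
  obtain ⟨hfaithful, hfull⟩ := hg
  have lift : ∀ {X : B} {x : X ⟶ A} (e : x ≫ (f ≫ g) ⟶ S.zro X E),
      ∃ e₀ : x ≫ f ⟶ S.zro X C, (α_ x f g).inv ≫ S.zeroWhiskerRight g e₀ = e := by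
    intro X x e
    obtain ⟨e₀, he₀⟩ := LocSCG.zeroWhiskerRight_surjective hfull ((α_ x f g).hom ≫ e)
    exact ⟨e₀, by rw [he₀, Iso.inv_hom_id_assoc]⟩
  constructor
  · intro X x e
    obtain ⟨e₀, rfl⟩ := lift e
    obtain ⟨x', e', hx'⟩ := hK.1 X x e₀
    exact ⟨x', e', (LocSCG.kernel_condition_comp_iff hfaithful ε' e₀ x' e').2 hx'⟩
  · intro X x e x₁ x₂ e₁ e₂ h₁ h₂
    obtain ⟨e₀, rfl⟩ := lift e
    exact hK.2 X x e₀ x₁ x₂ e₁ e₂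
      ((LocSCG.kernel_condition_comp_iff hfaithful ε' e₀ x₁ e₁).1 h₁)
      ((LocSCG.kernel_condition_comp_iff hfaithful ε' e₀ x₂ e₂).1 h₂)

/-- if `g` is fully faithful then a kernel of `f` is also a kernel of
`f ≫ g` (with the adjusted 2-cell `(ε_f ∘ g) · g_I^♭`). -/
theorem stmt14 {B : Type u} [Bicategory.{w, v} B] [Bicategory.Strict B]
    (S : LocSCG B) (hS : IsRelExact S)
    {A C E : B} (f : A ⟶ C) (g : C ⟶ E) (hg : CFullyFaithful g)
    (K : B) (k : K ⟶ A) (ε' : k ≫ f ⟶ S.zro K C) (hK : S.IsKernel f K k ε') :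
    S.IsKernel (f ≫ g) K k ((α_ k f g).inv ≫ (ε' ▷ g) ≫ (S.flat g).hom) :=
  stmt14_general S f g hg K k ε' hK
end

section
/- Let f: A→B, g: B→C be 1-cells and φ: f∘g ⟹ 0 a 2-cell in S. Let (Ker(f,φ), ℓ, ε) be a relative kernel of (f,φ), and let (ℓ̲: Ker(f,φ)→Ker(f), ε̲: ℓ̲∘k(f) ⟹ ℓ) be the factorization of ℓ through the kernel of f with (ε̲∘f)·ε = (ℓ̲∘ε_f)·ℓ̲_I^♯. Then ℓ̲ is fully faithful. -/
/-!
Common framework: relatively exact 2-categories (after Nakaoka,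
"Cohomology theory in 2-categories").
-/

open CategoryTheory Bicategory

universe w v u

/-!
Both kernels are fully faithful on 2-cells that are compatible with their kernel 2-cells.
Conjugating by the invertible comparison `x ∘ ε̲ : (x ∘ ℓ̲) ∘ k(f) ⟹ x ∘ ℓ` turns an arbitrary
2-cell `μ : x ∘ ℓ̲ ⟹ y ∘ ℓ̲` into a 2-cell `x ∘ ℓ ⟹ y ∘ ℓ` compatible with `ε`; this lifts along `ℓ`,
and the lift solves the problem for `ℓ̲` because `k(f)` is faithful.
-/

namespace CFaithful

variable {B : Type u} [Bicategory.{w, v} B]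

theorem of_comp {A C D : B} {f : A ⟶ C} {g : C ⟶ D} (h : CFaithful (f ≫ g)) : CFaithful f :=
  fun _ _ _ η θ hηθ => h η θ (by rw [whiskerRight_comp, whiskerRight_comp, hηθ])

theorem of_iso {A C : B} {f f' : A ⟶ C} (e : f ≅ f') (h : CFaithful f') : CFaithful f :=
  fun _ _ _ η θ hηθ => h η θ <| by
    rw [← cancel_epi (_ ◁ e.hom), whisker_exchange, whisker_exchange, hηθ]

end CFaithful

namespace LocSCG

variable {B : Type u} [Bicategory.{w, v} B] (S : LocSCG B)

/-- `(S.sharp f).hom`, typed with `S.zro` rather than `munit`: rewriting fails on terms that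
mix the two spellings of the zero 1-cell. -/
def sharpHom {A C E : B} (f : A ⟶ C) : f ≫ S.zro C E ⟶ S.zro A E := (S.sharp f).hom

def flatHom {A C E : B} (f : C ⟶ E) : S.zro A C ≫ f ⟶ S.zro A E := (S.flat f).hom

theorem sharpHom_naturality {A C E : B} {f g : A ⟶ C} (η : f ⟶ g) :
    (η ▷ S.zro C E) ≫ S.sharpHom g = S.sharpHom f :=
  S.sharp_natural η

theorem sharpHom_comp {A C E G : B} (f : A ⟶ C) (g : C ⟶ E) :
    S.sharpHom (E := G) (f ≫ g) = (α_ f g (S.zro E G)).hom ≫ (f ◁ S.sharpHom g) ≫ S.sharpHom f :=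
  S.sharp_comp f g

/-- The 2-cell `(x ∘ e) · x_I^♯`, exhibiting `(x ∘ k, …)` as a candidate kernel of `f` whenever
`(k, e)` is one. -/
def whiskerNull {X Y A C : B} (x : X ⟶ Y) {k : Y ⟶ A} {f : A ⟶ C}
    (e : k ≫ f ⟶ S.zro Y C) : (x ≫ k) ≫ f ⟶ S.zro X C :=
  (α_ x k f).hom ≫ (x ◁ e) ≫ S.sharpHom x

theorem whiskerNull_flatHom {X Y C E : B} (x : X ⟶ Y) (g : C ⟶ E) :
    S.whiskerNull x (S.flatHom (A := Y) g) = (S.sharpHom x ▷ g) ≫ S.flatHom g :=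
  (S.sharp_flat x g).symm

theorem whiskerNull_naturality {X Y A C : B} {x x' : X ⟶ Y} (ν : x ⟶ x') {k : Y ⟶ A}
    {f : A ⟶ C} (e : k ≫ f ⟶ S.zro Y C) :
    ((ν ▷ k) ▷ f) ≫ S.whiskerNull x' e = S.whiskerNull x e := by
  rw [whiskerNull, associator_naturality_left_assoc, ← whisker_exchange_assoc,
    sharpHom_naturality, whiskerNull]

theorem whiskerNull_whiskerRight {X Y A C : B} (x : X ⟶ Y) {k k' : Y ⟶ A} (σ : k ⟶ k')
    {f : A ⟶ C} (e : k' ≫ f ⟶ S.zro Y C) :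
    S.whiskerNull x ((σ ▷ f) ≫ e) = ((x ◁ σ) ▷ f) ≫ S.whiskerNull x e := by
  simp only [whiskerNull, Bicategory.whiskerLeft_comp, Category.assoc,
    associator_naturality_middle_assoc]

theorem whiskerNull_comp {X Y Z A C : B} (x : X ⟶ Y) (y : Y ⟶ Z) {k : Z ⟶ A} {f : A ⟶ C}
    (e : k ≫ f ⟶ S.zro Z C) :
    S.whiskerNull (x ≫ y) e = ((α_ x y k).hom ▷ f) ≫ S.whiskerNull x (S.whiskerNull y e) := by
  simp only [whiskerNull, sharpHom_comp, comp_whiskerLeft, Bicategory.whiskerLeft_comp,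
    Category.assoc, Iso.inv_hom_id_assoc, pentagon_assoc]

theorem relKerCompat_iff {X A C E : B} (f : A ⟶ C) (g : C ⟶ E) (φ : f ≫ g ⟶ S.zro A E)
    (x : X ⟶ A) (e : x ≫ f ⟶ S.zro X C) :
    S.RelKerCompat f g φ x e ↔ S.whiskerNull x φ = (e ▷ g) ≫ S.flatHom g :=
  Iff.rfl

theorem RelKerCompat.whiskerNull {A C E X Y : B} {f : A ⟶ C} {g : C ⟶ E}
    {φ : f ≫ g ⟶ S.zro A E} {k : Y ⟶ A} {e : k ≫ f ⟶ S.zro Y C}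
    (h : S.RelKerCompat f g φ k e) (x : X ⟶ Y) :
    S.RelKerCompat f g φ (x ≫ k) (S.whiskerNull x e) := by
  rw [relKerCompat_iff] at h ⊢
  rw [whiskerNull_comp, h, whiskerNull_whiskerRight, whiskerNull_flatHom, LocSCG.whiskerNull]
  simp only [comp_whiskerRight, Category.assoc]

def LiftsCompatibleCells {K A C : B} (k : K ⟶ A) {f : A ⟶ C} (e : k ≫ f ⟶ S.zro K C) :
    Prop :=
  ∀ ⦃X : B⦄ (x₁ x₂ : X ⟶ K) (μ : x₁ ≫ k ⟶ x₂ ≫ k),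
    (μ ▷ f) ≫ S.whiskerNull x₂ e = S.whiskerNull x₁ e → ∃! η : x₁ ⟶ x₂, η ▷ k = μ

variable {S}

theorem LiftsCompatibleCells.cFaithful {K A C : B} {k : K ⟶ A} {f : A ⟶ C}
    {e : k ≫ f ⟶ S.zro K C} (h : S.LiftsCompatibleCells k e) : CFaithful k := by
  intro X x₁ x₂ η θ hηθ
  exact (h x₁ x₂ (η ▷ k) (S.whiskerNull_naturality η e)).unique rfl hηθ.symm

theorem IsKernel.liftsCompatibleCells {K A C : B} {f : A ⟶ C} {k : K ⟶ A}
    {e : k ≫ f ⟶ S.zro K C} (hK : S.IsKernel f K k e) : S.LiftsCompatibleCells k e := by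
  intro X x₁ x₂ μ hμ
  simpa using hK.2 X (x₂ ≫ k) (S.whiskerNull x₂ e) x₁ x₂ μ (𝟙 _) hμ
    (by rw [id_whiskerRight, Category.id_comp]; rfl)

theorem IsRelKernel.liftsCompatibleCells {A C E K : B} {f : A ⟶ C} {g : C ⟶ E}
    {φ : f ≫ g ⟶ S.zro A E} {k : K ⟶ A} {e : k ≫ f ⟶ S.zro K C}
    (hK : S.IsRelKernel f g φ K k e) : S.LiftsCompatibleCells k e := by
  intro X x₁ x₂ μ hμ
  simpa using hK.2.2 X (x₂ ≫ k) (S.whiskerNull x₂ e) (hK.1.whiskerNull S x₂) x₁ x₂ μ (𝟙 _) hμ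
    (by rw [id_whiskerRight, Category.id_comp]; rfl)

section Comparison

variable {A C K Kf : B} {f : A ⟶ C} {l : K ⟶ A} {kf : Kf ⟶ A}
  {ε' : l ≫ f ⟶ S.zro K C} {εf : kf ≫ f ⟶ S.zro Kf C} {lb : K ⟶ Kf} {εb : lb ≫ kf ⟶ l}

theorem whiskerNull_comparison
    (hlb : (εb ▷ f) ≫ ε' = (α_ lb kf f).hom ≫ (lb ◁ εf) ≫ (S.sharp lb).hom)
    {X : B} (x : X ⟶ K) :
    (((α_ x lb kf).hom ≫ (x ◁ εb)) ▷ f) ≫ S.whiskerNull x ε' = S.whiskerNull (x ≫ lb) εf := by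
  have hlb' : (εb ▷ f) ≫ ε' = S.whiskerNull lb εf := hlb
  rw [comp_whiskerRight, Category.assoc, ← whiskerNull_whiskerRight, hlb', whiskerNull_comp]

theorem exists_whiskerRight_eq_of_comparison [IsIso εb] (hl : S.LiftsCompatibleCells l ε')
    (hkf : CFaithful kf)
    (hlb : (εb ▷ f) ≫ ε' = (α_ lb kf f).hom ≫ (lb ◁ εf) ≫ (S.sharp lb).hom)
    {X : B} {x y : X ⟶ K} (μ : x ≫ lb ⟶ y ≫ lb) : ∃ η : x ⟶ y, η ▷ lb = μ := by
  have hcomp : ((inv ((α_ x lb kf).hom ≫ (x ◁ εb)) ≫ (μ ▷ kf) ≫ (α_ y lb kf).hom ≫ (y ◁ εb))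
      ▷ f) ≫ S.whiskerNull y ε' = S.whiskerNull x ε' := by
    rw [comp_whiskerRight, comp_whiskerRight, Category.assoc, Category.assoc,
      whiskerNull_comparison hlb, whiskerNull_naturality, ← whiskerNull_comparison hlb x,
      ← comp_whiskerRight_assoc, IsIso.inv_hom_id, id_whiskerRight, Category.id_comp]
  obtain ⟨η, hη, -⟩ := hl x y _ hcomp
  refine ⟨η, hkf _ _ ?_⟩
  have hnat : ((η ▷ lb) ▷ kf) ≫ (α_ y lb kf).hom ≫ (y ◁ εb)
      = ((α_ x lb kf).hom ≫ (x ◁ εb)) ≫ (η ▷ l) := by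
    rw [Category.assoc, whisker_exchange, associator_naturality_left_assoc]
  rw [hη, IsIso.hom_inv_id_assoc] at hnat
  exact (cancel_mono _).mp hnat

end Comparison

end LocSCG

theorem stmt15_general {B : Type u} [Bicategory.{w, v} B]
    (S : LocSCG B)
    {A C E : B} (f : A ⟶ C) (g : C ⟶ E) (φ : f ≫ g ⟶ S.zro A E)
    (K : B) (l : K ⟶ A) (ε' : l ≫ f ⟶ S.zro K C) (hK : S.IsRelKernel f g φ K l ε')
    (Kf : B) (kf : Kf ⟶ A) (εf : kf ≫ f ⟶ S.zro Kf C) (hKf : S.IsKernel f Kf kf εf)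
    (lb : K ⟶ Kf) (εb : lb ≫ kf ⟶ l)
    (hlb : (εb ▷ f) ≫ ε' = (α_ lb kf f).hom ≫ (lb ◁ εf) ≫ (S.sharp lb).hom) :
    CFullyFaithful lb := by
  have := S.cellIso εb
  have hl := hK.liftsCompatibleCells
  exact ⟨(hl.cFaithful.of_iso (asIso εb)).of_comp, fun _ _ _ μ =>
    LocSCG.exists_whiskerRight_eq_of_comparison hl hKf.liftsCompatibleCells.cFaithful hlb μ⟩

/-- the comparison 1-cell from a relative kernel to the plain kernel is
fully faithful. -/
theorem stmt15 {B : Type u} [Bicategory.{w, v} B] [Bicategory.Strict B]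
    (S : LocSCG B) (hS : IsRelExact S)
    {A C E : B} (f : A ⟶ C) (g : C ⟶ E) (φ : f ≫ g ⟶ S.zro A E)
    (K : B) (l : K ⟶ A) (ε' : l ≫ f ⟶ S.zro K C) (hK : S.IsRelKernel f g φ K l ε')
    (Kf : B) (kf : Kf ⟶ A) (εf : kf ≫ f ⟶ S.zro Kf C) (hKf : S.IsKernel f Kf kf εf)
    (lb : K ⟶ Kf) (εb : lb ≫ kf ⟶ l)
    (hlb : (εb ▷ f) ≫ ε' = (α_ lb kf f).hom ≫ (lb ◁ εf) ≫ (S.sharp lb).hom) :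
    CFullyFaithful lb :=
  stmt15_general S f g φ K l ε' hK Kf kf εf hKf lb εb hlb
end
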